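/- Fix positive integers m₁, m₂, s₁, s₂. Let L, I₀, K₀, N be finitely supported functions ℤ×ℤ → ℝ with K₀ in the simplex S and supported in the m₁×m₂ grid, and set B = I₀⊗K₀ + N with ‖L⊗N‖_F ≤ ε for some ε ≥ 0. Let (κ_i)_{i=1,…,s₁s₂} be functions supported in the s₁×s₂ grid with ‖κ_i‖_F = 1 for every i, set σ_i = ‖(L⊗B)⊗κ_i‖_F, assume σ_i > 0 for all i, and let σ_min = min_i σ_i. Suppose τ > 0 satisfies ‖(L⊗I₀)⊗X‖_F ≥ τ·‖X‖_F for every X supported in the (m₁+s₁−1)×(m₂+s₂−1) grid. Then the regularizer h(K) = ∑_{i=1}^{s₁s₂} ‖K⊗κ_i‖_F²/σ_i² satisfies h(K₀) ≤ s₁s₂·(1 + √(s₁s₂)·ε/σ_min)² / τ². -/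

import Mathlib

/-- Images, kernels, and filters: finitely supported functions `ℤ × ℤ → ℝ`. -/
abbrev Img := (ℤ × ℤ) →₀ ℝ

/-- Discrete 2D convolution: `(X ⊗ Y)(i,j) = ∑_{(u,v)} X((i,j)-(u,v)) * Y(u,v)`. -/
noncomputable def conv (X Y : Img) : Img :=
  X.sum fun a xa => Y.sum fun b yb => Finsupp.single (a + b) (xa * yb)

/-- Frobenius norm `‖X‖_F = √(∑ X(i,j)²)`. -/
noncomputable def frob (X : Img) : ℝ := Real.sqrt (X.sum fun _ c => c ^ 2)

/-- Inner product `⟨X, Y⟩ = ∑ X(i,j) * Y(i,j)`. -/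
noncomputable def inner2 (X Y : Img) : ℝ := X.sum fun p c => c * Y p

/-- ℓ¹ norm `‖X‖₁ = ∑ |X(i,j)|`. -/
noncomputable def l1 (X : Img) : ℝ := X.sum fun _ c => |c|

/-- The simplex `S` of blur kernels: nonnegative entries summing to one. -/
def InSimplex (K : Img) : Prop := (∀ p, 0 ≤ K p) ∧ (K.sum fun _ c => c) = 1

/-- `X` is supported in the `a × b` grid `{0,…,a-1} × {0,…,b-1}`. -/
def SuppIn (a b : ℕ) (X : Img) : Prop :=
  ∀ p : ℤ × ℤ, ¬(0 ≤ p.1 ∧ p.1 < (a : ℤ) ∧ 0 ≤ p.2 ∧ p.2 < (b : ℤ)) → X p = 0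

/-!
For each filter `κᵢ`, the image `K₀ ⊗ κᵢ` lives in the `(m₁+s₁-1) × (m₂+s₂-1)` grid, so the
sharpness assumption gives
`τ ‖K₀ ⊗ κᵢ‖_F ≤ ‖(L ⊗ I₀) ⊗ (K₀ ⊗ κᵢ)‖_F = ‖(L ⊗ B) ⊗ κᵢ - (L ⊗ N) ⊗ κᵢ‖_F ≤ σᵢ + ε ‖κᵢ‖₁`
by Young's inequality `‖X ⊗ Y‖_F ≤ ‖X‖_F ‖Y‖₁`, and `‖κᵢ‖₁ ≤ √(s₁s₂)` by Cauchy–Schwarz on the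
`s₁ × s₂` grid. Dividing by `σᵢ ≥ σ_min` bounds each of the `s₁s₂` terms of `h(K₀)`.
-/

open Finset
open scoped Pointwise

lemma conv_eq_coeff_mul (X Y : Img) :
    conv X Y = (AddMonoidAlgebra.ofCoeff X * AddMonoidAlgebra.ofCoeff Y :
      AddMonoidAlgebra ℝ (ℤ × ℤ)).coeff := by
  rw [AddMonoidAlgebra.mul_def]
  simp only [AddMonoidAlgebra.coeff_finsuppSum, AddMonoidAlgebra.coeff_single]
  rfl

lemma conv_assoc (X Y Z : Img) : conv (conv X Y) Z = conv X (conv Y Z) := by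
  simp only [conv_eq_coeff_mul, AddMonoidAlgebra.ofCoeff_coeff, mul_assoc]

lemma conv_add (X Y Z : Img) : conv X (Y + Z) = conv X Y + conv X Z := by
  simp only [conv_eq_coeff_mul, AddMonoidAlgebra.ofCoeff_add, mul_add, AddMonoidAlgebra.coeff_add]

lemma add_conv (X Y Z : Img) : conv (X + Y) Z = conv X Z + conv Y Z := by
  simp only [conv_eq_coeff_mul, AddMonoidAlgebra.ofCoeff_add, add_mul, AddMonoidAlgebra.coeff_add]

lemma conv_eq_sum_smul_mapDomain (X Y : Img) :
    conv X Y = Y.sum fun b c => c • Finsupp.mapDomain (· + b) X := by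
  simp only [conv, Finsupp.sum]
  rw [sum_comm]
  refine sum_congr rfl fun b _ => ?_
  rw [Finsupp.mapDomain, Finsupp.smul_sum]
  exact sum_congr rfl fun a _ => by
    simp only [Finsupp.smul_single, smul_eq_mul, mul_comm]

noncomputable def grid (a b : ℕ) : Finset (ℤ × ℤ) := Ico 0 (a : ℤ) ×ˢ Ico 0 (b : ℤ)

lemma card_grid (a b : ℕ) : #(grid a b) = a * b := by
  simp [grid, Int.card_Ico]

lemma suppIn_iff_support_subset {a b : ℕ} {X : Img} : SuppIn a b X ↔ X.support ⊆ grid a b := by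
  simp only [SuppIn, subset_iff, Finsupp.mem_support_iff, grid, mem_product, mem_Ico]
  exact ⟨fun h p hp => by_contra fun hn => hp (h p (by tauto)),
    fun h p hp => by_contra fun hn => hp (by have := h hn; tauto)⟩

lemma grid_add_subset (a b c d : ℕ) : grid a b + grid c d ⊆ grid (a + c - 1) (b + d - 1) := by
  intro p hp
  obtain ⟨u, hu, v, hv, rfl⟩ := mem_add.mp hp
  simp only [grid, mem_product, mem_Ico] at hu hv ⊢
  simp only [Prod.fst_add, Prod.snd_add]
  omega

lemma SuppIn.conv {a b c d : ℕ} {X Y : Img} (hX : SuppIn a b X) (hY : SuppIn c d Y) :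
    SuppIn (a + c - 1) (b + d - 1) (conv X Y) := by
  classical
  rw [suppIn_iff_support_subset] at *
  rw [conv_eq_coeff_mul]
  exact (AddMonoidAlgebra.support_coeff_mul_subset _ _).trans
    ((add_subset_add hX hY).trans (grid_add_subset a b c d))

lemma frob_sq_eq_sum_of_support_subset {X : Img} {s : Finset (ℤ × ℤ)} (h : X.support ⊆ s) :
    frob X ^ 2 = ∑ p ∈ s, X p ^ 2 := by
  rw [frob, Real.sq_sqrt, Finsupp.sum_of_support_subset X h (fun _ c => c ^ 2)
    fun _ _ => zero_pow two_ne_zero]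
  exact sum_nonneg fun _ _ => sq_nonneg _

lemma l1_eq_sum_of_support_subset {X : Img} {s : Finset (ℤ × ℤ)} (h : X.support ⊆ s) :
    l1 X = ∑ p ∈ s, |X p| :=
  Finsupp.sum_of_support_subset X h _ fun _ _ => abs_zero

lemma frob_nonneg (X : Img) : 0 ≤ frob X := Real.sqrt_nonneg _

lemma l1_nonneg (X : Img) : 0 ≤ l1 X := sum_nonneg fun _ _ => abs_nonneg _

noncomputable def euclideanRestrict (s : Finset (ℤ × ℤ)) : Img →ₗ[ℝ] EuclideanSpace ℝ s where
  toFun X := WithLp.toLp 2 fun p => X p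
  map_add' _ _ := rfl
  map_smul' _ _ := rfl

lemma frob_eq_norm_euclideanRestrict {X : Img} {s : Finset (ℤ × ℤ)} (h : X.support ⊆ s) :
    frob X = ‖euclideanRestrict s X‖ := by
  rw [← sq_eq_sq₀ (frob_nonneg X) (norm_nonneg _), frob_sq_eq_sum_of_support_subset h,
    EuclideanSpace.norm_sq_eq, ← sum_coe_sort s]
  simp only [Real.norm_eq_abs, sq_abs]
  rfl

lemma frob_add_le (X Y : Img) : frob (X + Y) ≤ frob X + frob Y := by
  classical
  have hX : X.support ⊆ X.support ∪ Y.support := subset_union_left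
  have hY : Y.support ⊆ X.support ∪ Y.support := subset_union_right
  rw [frob_eq_norm_euclideanRestrict Finsupp.support_add, frob_eq_norm_euclideanRestrict hX,
    frob_eq_norm_euclideanRestrict hY, map_add]
  exact norm_add_le _ _

lemma frob_smul (c : ℝ) (X : Img) : frob (c • X) = |c| * frob X := by
  rw [frob_eq_norm_euclideanRestrict Finsupp.support_smul,
    frob_eq_norm_euclideanRestrict subset_rfl, map_smul, norm_smul, Real.norm_eq_abs]

lemma frob_sub_le (X Y : Img) : frob (X - Y) ≤ frob X + frob Y := by
  have hneg : frob (-Y) = frob Y := by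
    simpa only [neg_one_smul, abs_neg, abs_one, one_mul] using frob_smul (-1) Y
  simpa only [sub_eq_add_neg, hneg] using frob_add_le X (-Y)

lemma frob_sum_le {ι : Type*} (t : Finset ι) (F : ι → Img) :
    frob (∑ i ∈ t, F i) ≤ ∑ i ∈ t, frob (F i) :=
  le_sum_of_subadditive frob (by simp [frob]) frob_add_le t F

lemma frob_mapDomain_add (b : ℤ × ℤ) (X : Img) :
    frob (Finsupp.mapDomain (· + b) X) = frob X := by
  have h := Finsupp.sum_embDomain (f := addRightEmbedding b) (v := X) (g := fun _ c => c ^ 2)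
  rw [Finsupp.embDomain_eq_mapDomain] at h
  rw [frob, frob, ← h]
  rfl

lemma frob_conv_le (X Y : Img) : frob (conv X Y) ≤ frob X * l1 Y := by
  rw [conv_eq_sum_smul_mapDomain]
  calc frob (Y.sum fun b c => c • Finsupp.mapDomain (· + b) X)
      ≤ ∑ b ∈ Y.support, frob (Y b • Finsupp.mapDomain (· + b) X) := frob_sum_le _ _
    _ = frob X * l1 Y := by
      simp only [frob_smul, frob_mapDomain_add, l1, Finsupp.sum, mul_sum, mul_comm]

lemma l1_le_sqrt_card_mul_frob {X : Img} {s : Finset (ℤ × ℤ)} (h : X.support ⊆ s) :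
    l1 X ≤ √(#s : ℝ) * frob X := by
  rw [← Real.sqrt_sq (frob_nonneg X), ← Real.sqrt_mul (Nat.cast_nonneg _),
    Real.le_sqrt (l1_nonneg X) (by positivity), l1_eq_sum_of_support_subset h,
    frob_sq_eq_sum_of_support_subset h]
  simpa only [sq_abs] using sq_sum_le_card_mul_sum_sq (s := s) (f := fun p => |X p|)

lemma SuppIn.l1_le_sqrt_mul_frob {a b : ℕ} {X : Img} (h : SuppIn a b X) :
    l1 X ≤ √((a : ℝ) * b) * frob X := by
  simpa [card_grid] using l1_le_sqrt_card_mul_frob (suppIn_iff_support_subset.mp h)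

lemma frob_conv_le_of_suppIn {a b : ℕ} {κ : Img} (h : SuppIn a b κ) (X : Img) :
    frob (conv X κ) ≤ √((a : ℝ) * b) * frob κ * frob X := by
  rw [mul_comm _ (frob X)]
  exact (frob_conv_le X κ).trans
    (mul_le_mul_of_nonneg_left h.l1_le_sqrt_mul_frob (frob_nonneg X))

lemma conv_conv_add_conv (L I K N κ : Img) :
    conv (conv L (conv I K + N)) κ = conv (conv L I) (conv K κ) + conv (conv L N) κ := by
  rw [conv_add, add_conv, ← conv_assoc L I K, conv_assoc]

lemma sq_div_sq_le_of_mul_le_add {u σ σmin τ c : ℝ} (hu : 0 ≤ u) (hσmin : 0 < σmin)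
    (hle : σmin ≤ σ) (hτ : 0 < τ) (hc : 0 ≤ c) (h : τ * u ≤ σ + c) :
    u ^ 2 / σ ^ 2 ≤ (1 + c / σmin) ^ 2 / τ ^ 2 := by
  have hσ : 0 < σ := hσmin.trans_le hle
  rw [← div_pow, ← div_pow]
  gcongr ?_ ^ 2
  rw [div_le_div_iff₀ hσ hτ]
  have hc' : c ≤ c / σmin * σ := by
    rw [div_mul_eq_mul_div, le_div_iff₀ hσmin]
    exact mul_le_mul_of_nonneg_left hle hc
  nlinarith

theorem regularizer_at_true_kernel_noisy_general (m₁ m₂ s₁ s₂ : ℕ)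
    (L I₀ K₀ N B : Img) (hK₀supp : SuppIn m₁ m₂ K₀)
    (hB : B = conv I₀ K₀ + N)
    (ε : ℝ) (hN : frob (conv L N) ≤ ε)
    (κ : Fin (s₁ * s₂) → Img) (hκsupp : ∀ i, SuppIn s₁ s₂ (κ i))
    (hκnorm : ∀ i, frob (κ i) = 1)
    (σ : Fin (s₁ * s₂) → ℝ) (hσ : ∀ i, σ i = frob (conv (conv L B) (κ i)))
    (hσpos : ∀ i, 0 < σ i)
    (σmin : ℝ) (hσmin : IsLeast (Set.range σ) σmin)
    (τ : ℝ) (hτ : 0 < τ)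
    (hsharp : ∀ X : Img, SuppIn (m₁ + s₁ - 1) (m₂ + s₂ - 1) X →
      τ * frob X ≤ frob (conv (conv L I₀) X)) :
    ∑ i, frob (conv K₀ (κ i)) ^ 2 / (σ i) ^ 2 ≤
      (s₁ : ℝ) * (s₂ : ℝ) * (1 + Real.sqrt ((s₁ : ℝ) * (s₂ : ℝ)) * ε / σmin) ^ 2 / τ ^ 2 := by
  obtain ⟨⟨j, rfl⟩, hσmin⟩ := hσmin
  set c := √((s₁ : ℝ) * s₂) * ε
  have hε : 0 ≤ ε := (frob_nonneg _).trans hN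
  have hbound (i) : τ * frob (conv K₀ (κ i)) ≤ σ i + c := by
    have hnoise : frob (conv (conv L N) (κ i)) ≤ c := by
      have := frob_conv_le_of_suppIn (hκsupp i) (conv L N)
      rw [hκnorm i, mul_one] at this
      exact this.trans (mul_le_mul_of_nonneg_left hN (Real.sqrt_nonneg _))
    calc τ * frob (conv K₀ (κ i))
        ≤ frob (conv (conv L I₀) (conv K₀ (κ i))) := hsharp _ (hK₀supp.conv (hκsupp i))
      _ = frob (conv (conv L B) (κ i) - conv (conv L N) (κ i)) := by
        rw [hB, conv_conv_add_conv, add_sub_cancel_right]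
      _ ≤ σ i + c := by
        rw [hσ i]
        exact (frob_sub_le _ _).trans (by linarith)
  calc ∑ i, frob (conv K₀ (κ i)) ^ 2 / (σ i) ^ 2
      ≤ ∑ _i : Fin (s₁ * s₂), (1 + c / σ j) ^ 2 / τ ^ 2 := sum_le_sum fun i _ =>
        sq_div_sq_le_of_mul_le_add (frob_nonneg _) (hσpos j) (hσmin ⟨i, rfl⟩) hτ
          (by positivity) (hbound i)
    _ = _ := by
      simp only [sum_const, card_univ, Fintype.card_fin, nsmul_eq_mul, c]
      push_cast
      ring

/-- Noisy bound on the regularizer at the true kernel: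
`h(K₀) ≤ s₁s₂ (1 + √(s₁s₂) ε / σ_min)² / τ²`. -/
theorem regularizer_at_true_kernel_noisy (m₁ m₂ s₁ s₂ : ℕ)
    (hm₁ : 0 < m₁) (hm₂ : 0 < m₂) (hs₁ : 0 < s₁) (hs₂ : 0 < s₂)
    (L I₀ K₀ N B : Img) (hK₀ : InSimplex K₀) (hK₀supp : SuppIn m₁ m₂ K₀)
    (hB : B = conv I₀ K₀ + N)
    (ε : ℝ) (hε : 0 ≤ ε) (hN : frob (conv L N) ≤ ε)
    (κ : Fin (s₁ * s₂) → Img) (hκsupp : ∀ i, SuppIn s₁ s₂ (κ i))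
    (hκnorm : ∀ i, frob (κ i) = 1)
    (σ : Fin (s₁ * s₂) → ℝ) (hσ : ∀ i, σ i = frob (conv (conv L B) (κ i)))
    (hσpos : ∀ i, 0 < σ i)
    (σmin : ℝ) (hσmin : IsLeast (Set.range σ) σmin)
    (τ : ℝ) (hτ : 0 < τ)
    (hsharp : ∀ X : Img, SuppIn (m₁ + s₁ - 1) (m₂ + s₂ - 1) X →
      τ * frob X ≤ frob (conv (conv L I₀) X)) :
    ∑ i, frob (conv K₀ (κ i)) ^ 2 / (σ i) ^ 2 ≤
      (s₁ : ℝ) * (s₂ : ℝ) * (1 + Real.sqrt ((s₁ : ℝ) * (s₂ : ℝ)) * ε / σmin) ^ 2 / τ ^ 2 :=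
  regularizer_at_true_kernel_noisy_general m₁ m₂ s₁ s₂ L I₀ K₀ N B hK₀supp hB ε hN κ hκsupp hκnorm σ
    hσ hσpos σmin hσmin τ hτ hsharp
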